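/- arXiv:1602.01598 — 2 statements merged into one kernel-verified Lean document; each statement's English description precedes it below -/
import Mathlib

section
/- Let p ∈ ℕ, let ω : Fin (p+1) → ℝ satisfy ω_k > 0 for all k and ∑_k ω_k = 2, let D : Fin (p+1) → ℝ satisfy ∑_k D_k = 0, let λ > 0, and let v₊, v₋ ∈ ℝ. Write (v)⁻ = min(v, 0) and (v)⁺ = max(v, 0). Define for each k the coefficient c_k = ω_k/2 − λ·(D_k − δ_{k,p}·(v₊)⁻ + δ_{k,0}·(v₋)⁺) (where δ is the Kronecker symbol), and define c_R = −λ·(v₊)⁻ and c_L = λ·(v₋)⁺. If the CFL condition λ·(D_k − δ_{k,p}·(v₊)⁻ + δ_{k,0}·(v₋)⁺) < ω_k/2 holds for every k, then all the coefficients c_0, …, c_p, c_L, c_R are nonnegative and c_L + c_R + ∑_k c_k = 1; in particular, any vector of the form ∑_k c_k·U_k + c_R·U_R + c_L·U_L is a convex combination of U_0, …, U_p, U_L, U_R. -/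
open Finset

/-- Under the CFL condition, the coefficients appearing in the cell-mean update of
the transport step are nonnegative and sum to one, so the updated mean is a convex
combination of the degrees of freedom and the neighboring traces. -/
theorem transport_step_convex_combination
    (p : ℕ) (ω D : Fin (p + 1) → ℝ)
    (hω : ∀ k, 0 < ω k) (hωsum : ∑ k, ω k = 2)
    (hDsum : ∑ k, D k = 0)
    (lam : ℝ) (hlam : 0 < lam) (vp vm : ℝ)
    (c : Fin (p + 1) → ℝ)
    (hc : ∀ k, c k = ω k / 2 - lam * (D k
      - (if k = Fin.last p then min vp 0 else 0)
      + (if k = 0 then max vm 0 else 0)))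
    (cR cL : ℝ) (hcR : cR = -lam * min vp 0) (hcL : cL = lam * max vm 0)
    (hCFL : ∀ k, lam * (D k
      - (if k = Fin.last p then min vp 0 else 0)
      + (if k = 0 then max vm 0 else 0)) < ω k / 2) :
    (∀ k, 0 ≤ c k) ∧ 0 ≤ cL ∧ 0 ≤ cR ∧ cL + cR + ∑ k, c k = 1 := by
  refine ⟨fun k => by rw [hc]; linarith [hCFL k], ?_, ?_, ?_⟩
  · rw [hcL]; positivity
  · rw [hcR]
    have : min vp 0 ≤ 0 := min_le_right _ _
    nlinarith
  · have h1 : ∑ k, c k = (∑ k, ω k)/2 - lam * ((∑ k, D k) - min vp 0 + max vm 0) := by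
      simp only [hc, mul_sub, mul_add, mul_ite, mul_zero, Finset.sum_sub_distrib,
        Finset.sum_add_distrib, Finset.sum_ite_eq', Finset.mem_univ, if_true,
        Finset.sum_div, Finset.mul_sum]
    rw [h1, hωsum, hDsum, hcL, hcR]; ring
end

section
/- Let p ∈ ℕ, let ω : Fin (p+1) → ℝ satisfy ω_k > 0 for all k and ∑_k ω_k = 2, let ρ : Fin (p+1) → ℝ, set ρ̄ = ∑_k (ω_k/2)·ρ_k and ρ_min = min_k ρ_k, and let ε ∈ ℝ with 0 < ε ≤ ρ̄ and ρ_min < ρ̄. Define θ = min((ρ̄ − ε)/(ρ̄ − ρ_min), 1) and the limited values ρ̆_k = θ·(ρ_k − ρ̄) + ρ̄. Then θ ∈ [0, 1], the limited values satisfy ρ̆_k ≥ ε for every k, and the weighted mean is preserved: ∑_k (ω_k/2)·ρ̆_k = ρ̄. -/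
open Finset

/-- The a posteriori positivity limiter: the limited nodal densities are bounded
below by `ε` and the quadrature cell mean is preserved. -/
theorem positivity_limiter_properties
    (p : ℕ) (ω ρ : Fin (p + 1) → ℝ)
    (hω : ∀ k, 0 < ω k) (hωsum : ∑ k, ω k = 2)
    (ρbar : ℝ) (hρbar : ρbar = ∑ k, ω k / 2 * ρ k)
    (ρmin : ℝ) (hρmin : IsLeast (Set.range ρ) ρmin)
    (ε : ℝ) (hε : 0 < ε) (hερ : ε ≤ ρbar) (hlt : ρmin < ρbar)
    (θ : ℝ) (hθ : θ = min ((ρbar - ε) / (ρbar - ρmin)) 1)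
    (ρlim : Fin (p + 1) → ℝ)
    (hρlim : ∀ k, ρlim k = θ * (ρ k - ρbar) + ρbar) :
    θ ∈ Set.Icc (0 : ℝ) 1 ∧
    (∀ k, ε ≤ ρlim k) ∧
    ∑ k, ω k / 2 * ρlim k = ρbar := by
  have hden : 0 < ρbar - ρmin := by linarith
  have hθ0 : 0 ≤ θ := by
    rw [hθ]
    exact le_min (div_nonneg (by linarith) hden.le) one_pos.le
  have hθ1 : θ ≤ 1 := by rw [hθ]; exact min_le_right _ _
  have hθle : θ ≤ (ρbar - ε) / (ρbar - ρmin) := by rw [hθ]; exact min_le_left _ _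
  refine ⟨⟨hθ0, hθ1⟩, fun k => ?_, ?_⟩
  · have hk : ρmin ≤ ρ k := hρmin.2 ⟨k, rfl⟩
    have h1 : θ * (ρmin - ρbar) ≤ θ * (ρ k - ρbar) :=
      mul_le_mul_of_nonneg_left (by linarith) hθ0
    have h2 : (ρbar - ε) / (ρbar - ρmin) * (ρmin - ρbar) ≤ θ * (ρmin - ρbar) := by
      apply mul_le_mul_of_nonpos_right hθle (by linarith)
    have h3 : (ρbar - ε) / (ρbar - ρmin) * (ρmin - ρbar) = -(ρbar - ε) := by
      field_simp
      ring
    rw [hρlim k]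
    nlinarith
  · have hsum : ∑ k, ω k / 2 = 1 := by
      rw [← Finset.sum_div, hωsum]; norm_num
    simp only [hρlim]
    have : ∀ k : Fin (p+1), ω k / 2 * (θ * (ρ k - ρbar) + ρbar)
        = θ * (ω k / 2 * ρ k) - θ * ρbar * (ω k / 2) + ρbar * (ω k / 2) := by
      intro k; ring
    rw [Finset.sum_congr rfl fun k _ => this k]
    rw [Finset.sum_add_distrib, Finset.sum_sub_distrib, ← Finset.mul_sum,
      ← Finset.mul_sum, ← Finset.mul_sum, hsum, ← hρbar]
    ring
end
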